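/- arXiv:1210.7298 — 7 statements merged into one kernel-verified Lean document; each statement's English description precedes it below -/
import Mathlib

section
/- Let G be a group and let H' ≤ H ≤ G be subgroups such that H' has finite index in H. If H' is separable in G, then H is separable in G. -/
/-!
Separability of `H` can be witnessed by normal subgroups of finite index: `g ∉ H` is separated
from `H` by `H ⊔ N` for some such `N`, and finitely many such witnesses can be intersected.
If `x₁, …, xₙ` represent the cosets of `H'` in `H` and `g ∉ H`, then every `xᵢ⁻¹ g` lies outside
`H'`; a single `N` with all `xᵢ⁻¹ g ∉ H' ⊔ N` gives `g ∉ H ⊔ N`, since `g = xᵢ h' n` with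
`h' ∈ H'`, `n ∈ N` would put `xᵢ⁻¹ g` in `H' ⊔ N`.
-/

/-- A subgroup `H` of a group `G` is separable in `G` if for every `g ∈ G` with `g ∉ H`
there exists a finite-index subgroup `K` of `G` with `H ≤ K` and `g ∉ K`. -/
def SubgroupSeparable {G : Type*} [Group G] (H : Subgroup G) : Prop :=
  ∀ g : G, g ∉ H → ∃ K : Subgroup G, K.FiniteIndex ∧ H ≤ K ∧ g ∉ K

namespace SubgroupSeparable

variable {G : Type*} [Group G] {H : Subgroup G}

theorem exists_normal_finiteIndex_notMem_sup (hH : SubgroupSeparable H) {g : G} (hg : g ∉ H) :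
    ∃ N : Subgroup G, N.Normal ∧ N.FiniteIndex ∧ g ∉ H ⊔ N := by
  obtain ⟨K, hKfi, hHK, hgK⟩ := hH g hg
  exact ⟨K.normalCore, inferInstance, inferInstance,
    fun hg' => hgK (sup_le hHK K.normalCore_le hg')⟩

theorem exists_normal_finiteIndex_forall_notMem_sup (hH : SubgroupSeparable H)
    {ι : Type*} [Finite ι] {g : ι → G} (hg : ∀ i, g i ∉ H) :
    ∃ N : Subgroup G, N.Normal ∧ N.FiniteIndex ∧ ∀ i, g i ∉ H ⊔ N := by
  choose N hNn hNfi hgN using fun i => hH.exists_normal_finiteIndex_notMem_sup (hg i)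
  refine ⟨⨅ i, N i, Subgroup.normal_iInf_normal hNn, Subgroup.finiteIndex_iInf hNfi,
    fun i hgi => hgN i ?_⟩
  exact sup_le_sup_left (iInf_le N i) H hgi

theorem of_forall_exists_normal_finiteIndex
    (h : ∀ g ∉ H, ∃ N : Subgroup G, N.Normal ∧ N.FiniteIndex ∧ g ∉ H ⊔ N) :
    SubgroupSeparable H := by
  intro g hg
  obtain ⟨N, -, hNfi, hgN⟩ := h g hg
  exact ⟨H ⊔ N, Subgroup.finiteIndex_of_le le_sup_right, le_sup_left, hgN⟩

end SubgroupSeparable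

/-- If `H' ≤ H ≤ G`, `H'` has finite index in `H`, and `H'` is separable in `G`,
then `H` is separable in `G`. -/
theorem separable_of_finiteIndex_subgroup {G : Type*} [Group G] (H' H : Subgroup G)
    (hle : H' ≤ H) (hfi : (H'.subgroupOf H).FiniteIndex)
    (hsep : SubgroupSeparable H') : SubgroupSeparable H := by
  have : Finite (H ⧸ H'.subgroupOf H) := Subgroup.finite_quotient_of_finiteIndex
  let x : H ⧸ H'.subgroupOf H → G := fun q => (q.out : H)
  have hx : ∀ h : H, (x h)⁻¹ * h ∈ H' := fun h => by
    have hh := QuotientGroup.out_eq' (h : H ⧸ H'.subgroupOf H)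
    rw [QuotientGroup.eq, Subgroup.mem_subgroupOf] at hh
    exact hh
  refine SubgroupSeparable.of_forall_exists_normal_finiteIndex fun g hg => ?_
  have hxg : ∀ q, (x q)⁻¹ * g ∉ H' := fun q hq =>
    hg (by simpa [x] using H.mul_mem (q.out : H).2 (hle hq))
  obtain ⟨N, hN, hNfi, hgN⟩ := hsep.exists_normal_finiteIndex_forall_notMem_sup hxg
  refine ⟨N, hN, hNfi, fun hg' => ?_⟩
  obtain ⟨h, hh, n, hn, rfl⟩ := Subgroup.mem_sup_of_normal_right.mp hg'
  apply hgN (⟨h, hh⟩ : H)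
  simpa only [mul_assoc] using Subgroup.mul_mem_sup (hx ⟨h, hh⟩) hn
end

section
/- Let G be a group, let G' be a finite-index subgroup of G, and let H' be a subgroup of G'. Then H' is separable in G' (as a subgroup of the group G') if and only if H' (viewed as a subgroup of G) is separable in G. -/
theorem Subgroup.finiteIndex_map_subtype {G : Type*} [Group G] {G' : Subgroup G}
    [G'.FiniteIndex] (K : Subgroup G') [K.FiniteIndex] : (K.map G'.subtype).FiniteIndex :=
  ⟨by
    rw [Subgroup.index_map_subtype]
    exact mul_ne_zero K.index_ne_zero_of_finite G'.index_ne_zero_of_finite⟩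

namespace SubgroupSeparable

variable {G : Type*} [Group G]

theorem subgroupOf {H : Subgroup G} (hH : SubgroupSeparable H) (G' : Subgroup G) :
    SubgroupSeparable (H.subgroupOf G') := by
  intro g hg
  obtain ⟨K, hK, hHK, hgK⟩ := hH g hg
  exact ⟨K.subgroupOf G', inferInstance, Subgroup.subgroupOf_mono G' hHK, hgK⟩

theorem map_subtype {G' : Subgroup G} [G'.FiniteIndex] {H : Subgroup G'}
    (hH : SubgroupSeparable H) : SubgroupSeparable (H.map G'.subtype) := by
  intro g hg
  by_cases hgG' : g ∈ G'
  · obtain ⟨K, hK, hHK, hgK⟩ := hH ⟨g, hgG'⟩ fun h => hg ⟨_, h, rfl⟩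
    refine ⟨K.map G'.subtype, Subgroup.finiteIndex_map_subtype K, Subgroup.map_mono hHK, ?_⟩
    exact (Subgroup.mem_map_iff_mem G'.subtype_injective).not.mpr hgK
  · exact ⟨G', inferInstance, Subgroup.map_subtype_le H, hgG'⟩

end SubgroupSeparable

/-- If `G'` is a finite-index subgroup of `G` and `H' ≤ G'`, then `H'` is separable in
the group `G'` if and only if `H'` is separable in `G`. -/
theorem separable_iff_separable_in_finiteIndex {G : Type*} [Group G] (G' : Subgroup G)
    (hG' : G'.FiniteIndex) (H' : Subgroup G) (hle : H' ≤ G') :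
    SubgroupSeparable (H'.subgroupOf G') ↔ SubgroupSeparable H' := by
  refine ⟨fun h => ?_, fun h => h.subgroupOf G'⟩
  simpa only [Subgroup.map_subgroupOf_eq_of_le hle] using h.map_subtype
end

section
/- Let A and B be residually finite groups and let H be a subgroup of A that is separable in A. Then the image of H under the canonical inclusion A → A ∗ B into the free product A ∗ B is separable in A ∗ B. -/
/-!
Since `Coprod.fst` retracts `A ∗ B` onto `A`, an element `g` with `fst g ∉ H` is separated from
`H` by the preimage under `fst` of a finite-index subgroup of `A`; it remains to separate `A`
itself from every `g ∉ A`.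

A reduced word for such a `g` has a letter from `B`. Choose finite quotients `P`, `Q` of `A`, `B`
in which all letters of this word stay nontrivial, and let `A ∗ B` act on the finite set of
reduced words over `P ⊕ Q` with at most `n = |g|` letters: each factor acts by left
multiplication, except that it acts trivially where the product would have more than `n`
letters. On the empty word, `g` produces the image of its reduced word, which has a `Q`-letter,
while `A` only produces words in `P`; so the preimage of the image of `A` in this finite
permutation group has finite index, contains `A` and misses `g`.
-/

open Monoid

/-- A group `G` is residually finite if every nontrivial element survives in some
finite quotient. -/
def ResiduallyFinite (G : Type*) [Group G] : Prop :=
  ∀ g : G, g ≠ 1 → ∃ (F : Type) (_ : Group F) (_ : Finite F) (φ : G →* F), φ g ≠ 1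

lemma Subgroup.exists_finiteIndex_le_notMem_of_map {G F : Type*} [Group G] [Group F] [Finite F]
    (Φ : G →* F) {L : Subgroup G} {g : G} (hg : Φ g ∉ L.map Φ) :
    ∃ K : Subgroup G, K.FiniteIndex ∧ L ≤ K ∧ g ∉ K :=
  ⟨(L.map Φ).comap Φ, Subgroup.finiteIndex_of_le (H := Φ.ker) fun x hx => by
    simp_all [MonoidHom.mem_ker, one_mem], L.le_comap_map Φ, hg⟩

lemma ResiduallyFinite.exists_forall_ne_one {G : Type*} [Group G] (hG : ResiduallyFinite G)
    (l : List G) (hl : ∀ g ∈ l, g ≠ 1) :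
    ∃ (F : Type) (_ : Group F) (_ : Finite F) (φ : G →* F), ∀ g ∈ l, φ g ≠ 1 := by
  induction l with
  | nil => exact ⟨PUnit, inferInstance, inferInstance, 1, by simp⟩
  | cons g t ih =>
    obtain ⟨F, _, _, φ, hφ⟩ := ih fun x hx => hl x (List.mem_cons_of_mem _ hx)
    obtain ⟨F', _, _, φ', hφ'⟩ := hG g (hl g List.mem_cons_self)
    refine ⟨F × F', inferInstance, inferInstance, φ.prod φ', ?_⟩
    simp only [List.forall_mem_cons, MonoidHom.prod_apply, ne_eq, Prod.mk_eq_one]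
    exact ⟨fun h => hφ' h.2, fun x hx h => hφ x hx h.1⟩

lemma SubgroupSeparable.map_of_leftInverse {A G : Type*} [Group A] [Group G] {f : A →* G}
    {r : G →* A} (hrf : Function.LeftInverse r f) (hf : SubgroupSeparable f.range)
    {H : Subgroup A} (hH : SubgroupSeparable H) : SubgroupSeparable (H.map f) := by
  intro g hg
  by_cases hrg : r g ∈ H
  · have hgf : g ∉ f.range := by
      rintro ⟨a, rfl⟩
      exact hg ⟨a, by rwa [hrf] at hrg, rfl⟩
    obtain ⟨K, hK, hfK, hgK⟩ := hf g hgf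
    exact ⟨K, hK, (H.map_le_range f).trans hfK, hgK⟩
  · obtain ⟨K, hK, hHK, hgK⟩ := hH (r g) hrg
    refine ⟨K.comap r, ⟨?_⟩, ?_, hgK⟩
    · rw [K.index_comap_of_surjective hrf.surjective]
      exact hK.index_ne_zero
    · rw [Subgroup.map_le_iff_le_comap, Subgroup.comap_comap]
      intro a ha
      simpa [hrf a] using hHK ha

namespace CoprodWord

section Monoid

variable {P Q : Type*} [Monoid P]

open Classical in
noncomputable def consLeft (x : P) (r : List (P ⊕ Q)) : List (P ⊕ Q) :=
  if x = 1 then r else .inl x :: r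

def headLeft : List (P ⊕ Q) → P
  | .inl x :: _ => x
  | _ => 1

def tailLeft : List (P ⊕ Q) → List (P ⊕ Q)
  | .inl _ :: t => t
  | l => l

noncomputable def mulLeft (n : ℕ) (p : P) (l : List (P ⊕ Q)) : List (P ⊕ Q) :=
  if (tailLeft l).length < n then consLeft (p * headLeft l) (tailLeft l) else l

lemma length_consLeft_le (x : P) (r : List (P ⊕ Q)) : (consLeft x r).length ≤ r.length + 1 := by
  unfold consLeft; split_ifs <;> simp

lemma mulLeft_consLeft {r : List (P ⊕ Q)} (hr : ∀ y ∈ r.head?, y.isRight) (n : ℕ) (p x : P) :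
    mulLeft n p (consLeft x r) = if r.length < n then consLeft (p * x) r else consLeft x r := by
  have : headLeft (consLeft x r) = x ∧ tailLeft (consLeft x r) = r := by
    rcases r with _ | ⟨a | b, t⟩ <;> by_cases hx : x = 1 <;>
      simp_all [consLeft, headLeft, tailLeft]
  simp only [mulLeft, this]

lemma mulLeft_of_head_isRight {r : List (P ⊕ Q)} (hr : ∀ y ∈ r.head?, y.isRight) {n : ℕ}
    (hn : r.length < n) {p : P} (hp : p ≠ 1) : mulLeft n p r = .inl p :: r := by
  simpa [consLeft, hn, hp] using mulLeft_consLeft hr n p 1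

lemma isLeft_of_mem_mulLeft_nil {n : ℕ} {p : P} {y : P ⊕ Q}
    (hy : y ∈ mulLeft n p ([] : List (P ⊕ Q))) : y.isLeft := by
  simp only [mulLeft, headLeft, tailLeft, consLeft, mul_one] at hy
  split_ifs at hy <;> simp_all

variable [Monoid Q]

def IsReduced (l : List (P ⊕ Q)) : Prop :=
  l.IsChain (fun x y => x.isLeft ≠ y.isLeft) ∧ ∀ x ∈ l, x ≠ .inl 1 ∧ x ≠ .inr 1

def ofWord (l : List (P ⊕ Q)) : Coprod P Q :=
  (l.map (Sum.elim Coprod.inl Coprod.inr)).prod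

lemma ofWord_cons (x : P ⊕ Q) (t : List (P ⊕ Q)) :
    ofWord (x :: t) = Sum.elim Coprod.inl Coprod.inr x * ofWord t :=
  List.prod_cons

@[simp] lemma isReduced_nil : IsReduced ([] : List (P ⊕ Q)) := ⟨List.isChain_nil, by simp⟩

lemma isReduced_cons {x : P ⊕ Q} {t : List (P ⊕ Q)} :
    IsReduced (x :: t) ↔
      (x ≠ .inl 1 ∧ x ≠ .inr 1) ∧ (∀ y ∈ t.head?, x.isLeft ≠ y.isLeft) ∧ IsReduced t := by
  simp only [IsReduced, List.isChain_cons, List.forall_mem_cons]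
  tauto

lemma IsReduced.exists_eq_consLeft {l : List (P ⊕ Q)} (hl : IsReduced l) :
    ∃ x r, IsReduced r ∧ (∀ y ∈ r.head?, y.isRight) ∧ l = consLeft x r := by
  rcases l with _ | ⟨x | y, t⟩
  · exact ⟨1, [], isReduced_nil, by simp, by simp [consLeft]⟩
  · obtain ⟨hx, ht, hr⟩ := isReduced_cons.1 hl
    refine ⟨x, t, hr, fun y hy => ?_, by simp_all [consLeft]⟩
    simpa using (ht y hy).symm
  · exact ⟨1, _, hl, by simp, by simp [consLeft]⟩

lemma IsReduced.consLeft {r : List (P ⊕ Q)} (hr : IsReduced r)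
    (hr' : ∀ y ∈ r.head?, y.isRight) (x : P) : IsReduced (consLeft x r) := by
  unfold CoprodWord.consLeft
  split_ifs with hx
  · exact hr
  · refine isReduced_cons.2 ⟨by simpa using hx, fun y hy => ?_, hr⟩
    simpa using hr' y hy

lemma ofWord_consLeft (x : P) (r : List (P ⊕ Q)) :
    ofWord (consLeft x r) = Coprod.inl x * ofWord r := by
  unfold consLeft; split_ifs with hx <;> simp [ofWord, hx]

lemma mulLeft_one {l : List (P ⊕ Q)} (hl : IsReduced l) (n : ℕ) : mulLeft n 1 l = l := by
  obtain ⟨x, r, -, hr, rfl⟩ := hl.exists_eq_consLeft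
  simp [mulLeft_consLeft hr]

lemma mulLeft_mul {l : List (P ⊕ Q)} (hl : IsReduced l) (n : ℕ) (p q : P) :
    mulLeft n p (mulLeft n q l) = mulLeft n (p * q) l := by
  obtain ⟨x, r, -, hr, rfl⟩ := hl.exists_eq_consLeft
  by_cases hn : r.length < n <;> simp [mulLeft_consLeft hr, hn, mul_assoc]

lemma IsReduced.mulLeft {l : List (P ⊕ Q)} (hl : IsReduced l) (n : ℕ) (p : P) :
    IsReduced (mulLeft n p l) := by
  obtain ⟨x, r, hr, hr', rfl⟩ := hl.exists_eq_consLeft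
  rw [mulLeft_consLeft hr']
  split_ifs
  exacts [hr.consLeft hr' _, hl]

lemma length_mulLeft_le {l : List (P ⊕ Q)} (hl : IsReduced l) {n : ℕ} (hn : l.length ≤ n)
    (p : P) : (mulLeft n p l).length ≤ n := by
  obtain ⟨x, r, -, hr', rfl⟩ := hl.exists_eq_consLeft
  rw [mulLeft_consLeft hr']
  split_ifs with h
  · exact (length_consLeft_le _ _).trans h
  · exact hn

lemma ofWord_mulLeft {l : List (P ⊕ Q)} (hl : IsReduced l) {n : ℕ} (hn : l.length < n)
    (p : P) : ofWord (mulLeft n p l) = Coprod.inl p * ofWord l := by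
  obtain ⟨x, r, -, hr', rfl⟩ := hl.exists_eq_consLeft
  have : r.length < n := lt_of_le_of_lt (by unfold consLeft; split_ifs <;> simp) hn
  rw [mulLeft_consLeft hr', if_pos this, ofWord_consLeft, ofWord_consLeft, map_mul, mul_assoc]

noncomputable def mulRight (n : ℕ) (q : Q) (l : List (P ⊕ Q)) : List (P ⊕ Q) :=
  (mulLeft n q (l.map Sum.swap)).map Sum.swap

@[simp] lemma isReduced_map_swap {l : List (P ⊕ Q)} :
    IsReduced (l.map Sum.swap) ↔ IsReduced l := by
  have hrel : (fun x y : P ⊕ Q => x.isRight ≠ y.isRight) = fun x y => x.isLeft ≠ y.isLeft := by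
    funext x y; cases x <;> cases y <;> simp
  simp only [IsReduced, List.isChain_map, Sum.isLeft_swap, List.forall_mem_map, hrel]
  exact and_congr_right' (forall₂_congr fun x _ => by cases x <;> simp [and_comm])

lemma ofWord_map_swap (l : List (P ⊕ Q)) :
    ofWord (l.map Sum.swap) = Coprod.swap P Q (ofWord l) := by
  induction l with
  | nil => simp [ofWord]
  | cons x t ih => rcases x with a | b <;> simp_all [ofWord]

lemma mulRight_one {l : List (P ⊕ Q)} (hl : IsReduced l) (n : ℕ) : mulRight n 1 l = l := by
  simp [mulRight, mulLeft_one (isReduced_map_swap.2 hl)]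

lemma mulRight_mul {l : List (P ⊕ Q)} (hl : IsReduced l) (n : ℕ) (p q : Q) :
    mulRight n p (mulRight n q l) = mulRight n (p * q) l := by
  simp [mulRight, mulLeft_mul (isReduced_map_swap.2 hl)]

lemma IsReduced.mulRight {l : List (P ⊕ Q)} (hl : IsReduced l) (n : ℕ) (q : Q) :
    IsReduced (mulRight n q l) :=
  isReduced_map_swap.2 ((isReduced_map_swap.2 hl).mulLeft n q)

lemma length_mulRight_le {l : List (P ⊕ Q)} (hl : IsReduced l) {n : ℕ} (hn : l.length ≤ n)
    (q : Q) : (mulRight n q l).length ≤ n := by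
  simpa [mulRight] using length_mulLeft_le (isReduced_map_swap.2 hl) (by simpa using hn) q

lemma mulRight_of_head_isLeft {r : List (P ⊕ Q)} (hr : ∀ y ∈ r.head?, y.isLeft) {n : ℕ}
    (hn : r.length < n) {q : Q} (hq : q ≠ 1) : mulRight n q r = .inr q :: r := by
  rw [mulRight, mulLeft_of_head_isRight (by simpa using hr) (by simpa using hn) hq]
  simp

lemma ofWord_mulRight {l : List (P ⊕ Q)} (hl : IsReduced l) {n : ℕ} (hn : l.length < n)
    (q : Q) : ofWord (mulRight n q l) = Coprod.inr q * ofWord l := by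
  rw [mulRight, ofWord_map_swap, ofWord_mulLeft (isReduced_map_swap.2 hl) (by simpa using hn),
    ofWord_map_swap, map_mul, Coprod.swap_inl, Coprod.swap_swap]

lemma exists_isReduced_ofWord_eq (g : Coprod P Q) : ∃ l, IsReduced l ∧ ofWord l = g := by
  induction g using Coprod.induction_on' with
  | one => exact ⟨[], isReduced_nil, rfl⟩
  | inl_mul p g ih =>
    obtain ⟨l, hl, rfl⟩ := ih
    exact ⟨_, hl.mulLeft _ p, ofWord_mulLeft hl l.length.lt_succ_self p⟩
  | inr_mul q g ih =>
    obtain ⟨l, hl, rfl⟩ := ih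
    exact ⟨_, hl.mulRight _ q, ofWord_mulRight hl l.length.lt_succ_self q⟩

lemma IsReduced.map {P' Q' : Type*} [Monoid P'] [Monoid Q'] {l : List (P ⊕ Q)} (hl : IsReduced l)
    {φ : P →* P'} {ψ : Q →* Q'} (hφ : ∀ p, .inl p ∈ l → φ p ≠ 1)
    (hψ : ∀ q, .inr q ∈ l → ψ q ≠ 1) : IsReduced (l.map (Sum.map φ ψ)) := by
  refine ⟨List.isChain_map _ |>.2 (by simpa only [Sum.isLeft_map] using hl.1), ?_⟩
  simp only [List.forall_mem_map]
  rintro (p | q) h <;> simp [hφ, hψ, h]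

lemma ofWord_map {P' Q' : Type*} [Monoid P'] [Monoid Q'] (φ : P →* P') (ψ : Q →* Q')
    (l : List (P ⊕ Q)) : Coprod.map φ ψ (ofWord l) = ofWord (l.map (Sum.map φ ψ)) := by
  induction l with
  | nil => simp [ofWord]
  | cons x t ih => rcases x with p | q <;> simp_all [ofWord]

variable (P Q) in
def BoundedWord (n : ℕ) : Type _ := {l : List (P ⊕ Q) // IsReduced l ∧ l.length ≤ n}

instance [Finite P] [Finite Q] (n : ℕ) : Finite (BoundedWord P Q n) :=
  ((List.finite_length_le (P ⊕ Q) n).subset fun _ h => h.2).to_subtype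

def BoundedWord.nil (n : ℕ) : BoundedWord P Q n := ⟨[], isReduced_nil, Nat.zero_le n⟩

noncomputable def leftEnd (n : ℕ) : P →* Function.End (BoundedWord P Q n) where
  toFun p w := ⟨mulLeft n p w.1, w.2.1.mulLeft n p, length_mulLeft_le w.2.1 w.2.2 p⟩
  map_one' := funext fun w => Subtype.ext (mulLeft_one w.2.1 n)
  map_mul' p q := funext fun w => Subtype.ext (mulLeft_mul w.2.1 n p q).symm

noncomputable def rightEnd (n : ℕ) : Q →* Function.End (BoundedWord P Q n) where
  toFun q w := ⟨mulRight n q w.1, w.2.1.mulRight n q, length_mulRight_le w.2.1 w.2.2 q⟩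
  map_one' := funext fun w => Subtype.ext (mulRight_one w.2.1 n)
  map_mul' p q := funext fun w => Subtype.ext (mulRight_mul w.2.1 n p q).symm

noncomputable def toEnd (n : ℕ) : Coprod P Q →* Function.End (BoundedWord P Q n) :=
  Coprod.lift (leftEnd n) (rightEnd n)

lemma toEnd_ofWord_nil {l : List (P ⊕ Q)} (hl : IsReduced l) {n : ℕ} (hn : l.length ≤ n) :
    (toEnd n (ofWord l) (BoundedWord.nil n)).1 = l := by
  induction l with
  | nil => rfl
  | cons x t ih =>
    obtain ⟨hx, hxt, ht⟩ := isReduced_cons.1 hl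
    have htn : t.length < n := hn
    rw [ofWord_cons, map_mul]
    rcases x with p | q
    · change mulLeft n p (toEnd n (ofWord t) (BoundedWord.nil n)).1 = _
      rw [ih ht htn.le]
      exact mulLeft_of_head_isRight (by simpa using hxt) htn (by simpa using hx.1)
    · change mulRight n q (toEnd n (ofWord t) (BoundedWord.nil n)).1 = _
      rw [ih ht htn.le]
      exact mulRight_of_head_isLeft (by simpa using hxt) htn (by simpa using hx.2)

lemma toEnd_inl_ne_ofWord {l : List (P ⊕ Q)} (hl : IsReduced l) {n : ℕ} (hn : l.length ≤ n)
    (hr : ∃ y ∈ l, y.isRight) (p : P) :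
    toEnd n (Coprod.inl p : Coprod P Q) ≠ toEnd n (ofWord l) := by
  intro h
  obtain ⟨y, hyl, hy⟩ := hr
  have hp : ∀ z ∈ (toEnd n (Coprod.inl p : Coprod P Q) (BoundedWord.nil n)).1, z.isLeft :=
    fun _ => isLeft_of_mem_mulLeft_nil
  rw [h, toEnd_ofWord_nil hl hn] at hp
  simpa [← Sum.not_isRight, hy] using hp y hyl

end Monoid

section Group

variable {P Q : Type*} [Group P] [Group Q]

noncomputable def toPerm (n : ℕ) : Coprod P Q →* Equiv.Perm (BoundedWord P Q n) :=
  Equiv.Perm.equivUnitsEnd.symm.toMonoidHom.comp (toEnd n).toHomUnits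

lemma toPerm_apply (n : ℕ) (g : Coprod P Q) (w : BoundedWord P Q n) :
    toPerm n g w = toEnd n g w :=
  rfl

lemma ofWord_mem_range_inl {l : List (P ⊕ Q)} (hl : ∀ y ∈ l, y.isLeft) :
    ofWord l ∈ (Coprod.inl : P →* Coprod P Q).range := by
  induction l with
  | nil => exact one_mem _
  | cons x t ih =>
    obtain ⟨p, rfl⟩ := Sum.isLeft_iff.1 (hl x List.mem_cons_self)
    exact mul_mem ⟨p, rfl⟩ (ih fun y hy => hl y (List.mem_cons_of_mem _ hy))

end Group

lemma IsReduced.exists_finite_map {A B : Type*} [Group A] [Group B]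
    (hA : ResiduallyFinite A) (hB : ResiduallyFinite B) {l : List (A ⊕ B)} (hl : IsReduced l) :
    ∃ (P Q : Type) (_ : Group P) (_ : Group Q) (_ : Finite P) (_ : Finite Q) (φ : A →* P)
      (ψ : B →* Q), IsReduced (l.map (Sum.map φ ψ)) := by
  obtain ⟨P, _, _, φ, hφ⟩ := hA.exists_forall_ne_one (l.filterMap Sum.getLeft?) (by
    simp only [List.mem_filterMap, Sum.getLeft?_eq_some_iff]
    rintro a ⟨_, ha, rfl⟩ rfl
    exact (hl.2 _ ha).1 rfl)
  obtain ⟨Q, _, _, ψ, hψ⟩ := hB.exists_forall_ne_one (l.filterMap Sum.getRight?) (by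
    simp only [List.mem_filterMap, Sum.getRight?_eq_some_iff]
    rintro b ⟨_, hb, rfl⟩ rfl
    exact (hl.2 _ hb).2 rfl)
  exact ⟨P, Q, inferInstance, inferInstance, inferInstance, inferInstance, φ, ψ,
    hl.map (fun a ha => hφ a (by simpa using ha)) (fun b hb => hψ b (by simpa using hb))⟩

end CoprodWord

open CoprodWord in
theorem subgroupSeparable_range_inl {A B : Type*} [Group A] [Group B] (hA : ResiduallyFinite A)
    (hB : ResiduallyFinite B) : SubgroupSeparable (Coprod.inl : A →* Coprod A B).range := by
  intro g hg
  obtain ⟨l, hl, rfl⟩ := exists_isReduced_ofWord_eq g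
  obtain ⟨y, hyl, hy⟩ : ∃ y ∈ l, y.isRight := by
    by_contra! h
    exact hg (ofWord_mem_range_inl (by simpa using h))
  obtain ⟨P, Q, _, _, _, _, φ, ψ, hl'⟩ := hl.exists_finite_map hA hB
  refine Subgroup.exists_finiteIndex_le_notMem_of_map
    ((toPerm l.length).comp (Coprod.map φ ψ)) ?_
  rintro ⟨_, ⟨a, rfl⟩, ha⟩
  refine toEnd_inl_ne_ofWord hl' (List.length_map _).le
    ⟨_, List.mem_map_of_mem hyl, by simpa using hy⟩ (φ a) ?_
  funext w
  simpa [toPerm_apply, ofWord_map] using DFunLike.congr_fun ha w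

open Monoid in
/-- If `A` and `B` are residually finite and `H ≤ A` is separable in `A`, then the
image of `H` in the free product `A ∗ B` is separable in `A ∗ B`. -/
theorem separable_image_in_free_product {A B : Type*} [Group A] [Group B]
    (hA : ResiduallyFinite A) (hB : ResiduallyFinite B)
    (H : Subgroup A) (hH : SubgroupSeparable H) :
    SubgroupSeparable (H.map (Coprod.inl : A →* Coprod A B)) :=
  SubgroupSeparable.map_of_leftInverse (r := Coprod.fst) (fun _ => rfl)
    (subgroupSeparable_range_inl hA hB) hH
end

section
/- If A and B are residually finite groups, then the free product A ∗ B is residually finite. -/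
namespace ResiduallyFinite

variable {G H : Type*} [Group G] [Group H]

theorem of_exists_finite_monoidHom.{w}
    (h : ∀ g : G, g ≠ 1 → ∃ (F : Type w) (_ : Group F) (_ : Finite F) (φ : G →* F), φ g ≠ 1) :
    ResiduallyFinite G := by
  intro g hg
  obtain ⟨F, _, _, φ, hφ⟩ := h g hg
  exact ⟨Shrink.{0} F, inferInstance, inferInstance, Shrink.mulEquiv.symm.toMonoidHom.comp φ,
    by simpa using hφ⟩

theorem of_injective (hG : ResiduallyFinite G) (f : H →* G) (hf : Function.Injective f) :
    ResiduallyFinite H := by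
  intro h hh
  obtain ⟨F, _, _, φ, hφ⟩ := hG (f h) ((map_ne_one_iff f hf).mpr hh)
  exact ⟨F, _, ‹_›, φ.comp f, hφ⟩

theorem exists_monoidHom_forall_ne_one (hG : ResiduallyFinite G) {S : Set G} (hS : S.Finite)
    (hS1 : 1 ∉ S) :
    ∃ (F : Type) (_ : Group F) (_ : Finite F) (φ : G →* F), ∀ s ∈ S, φ s ≠ 1 := by
  induction S, hS using Set.Finite.induction_on with
  | empty => exact ⟨Unit, _, inferInstance, 1, by simp⟩
  | @insert s S _ _ ih =>
    obtain ⟨F, _, _, φ, hφ⟩ := ih (fun h => hS1 (Set.mem_insert_of_mem s h))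
    obtain ⟨F', _, _, ψ, hψ⟩ := hG s (fun h => hS1 (h ▸ Set.mem_insert s S))
    refine ⟨F × F', _, inferInstance, φ.prod ψ, ?_⟩
    rintro t (rfl | ht) h
    · exact hψ (congrArg Prod.snd h)
    · exact hφ t ht (congrArg Prod.fst h)

end ResiduallyFinite

namespace Monoid.CoprodI.Word

section Monoid

variable {ι : Type*} {M N : ι → Type*} [∀ i, Monoid (M i)] [∀ i, Monoid (N i)]

def map (φ : ∀ i, M i →* N i) (w : Word M) (hφ : ∀ l ∈ w.toList, φ l.1 l.2 ≠ 1) : Word N where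
  toList := w.toList.map fun l => ⟨l.1, φ l.1 l.2⟩
  ne_one := by
    simp only [List.mem_map]
    rintro _ ⟨l, hl, rfl⟩
    exact hφ l hl
  chain_ne := List.isChain_map_of_isChain (fun l : Σ i, M i => (⟨l.1, φ l.1 l.2⟩ : Σ i, N i))
    (fun _ _ => id) w.chain_ne

theorem prod_map (φ : ∀ i, M i →* N i) (w : Word M) (hφ : ∀ l ∈ w.toList, φ l.1 l.2 ≠ 1) :
    (w.map φ hφ).prod = lift (fun i => of.comp (φ i)) w.prod := by
  simp [map, prod, map_list_prod, Function.comp_def]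

theorem map_eq_empty_iff (φ : ∀ i, M i →* N i) (w : Word M)
    (hφ : ∀ l ∈ w.toList, φ l.1 l.2 ≠ 1) : w.map φ hφ = empty ↔ w = empty := by
  simp [Word.ext_iff, map]

instance finite_length_le [Finite ι] [∀ i, Finite (M i)] (n : ℕ) :
    Finite {w : Word M // w.toList.length ≤ n} :=
  have : Finite {l : List (Σ i, M i) // l.length ≤ n} := (List.finite_length_le _ n).to_subtype
  Finite.of_injective (fun w => (⟨w.1.toList, w.2⟩ : {l : List (Σ i, M i) // l.length ≤ n}))
    fun _ _ h => Subtype.ext (Word.ext (congrArg Subtype.val h))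

variable [DecidableEq ι] [∀ i, DecidableEq (M i)]

theorem prod_eq_one_iff {w : Word M} : w.prod = 1 ↔ w = empty := by
  rw [← prod_empty]
  exact equiv.symm.injective.eq_iff (a := w) (b := empty)

theorem length_of_smul_le {i : ι} (m : M i) (w : Word M) :
    (of m • w).toList.length ≤ (equivPair i w).tail.toList.length + 1 := by
  rw [of_smul_def, rcons]
  split_ifs <;> simp

def truncSMul (n : ℕ) {i : ι} (m : M i) (w : Word M) : Word M :=
  if (equivPair i w).tail.toList.length < n then of m • w else w

variable (n : ℕ) {i : ι}

theorem truncSMul_one (w : Word M) : truncSMul n (1 : M i) w = w := by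
  simp [truncSMul]

theorem truncSMul_mul (m m' : M i) (w : Word M) :
    truncSMul n (m * m') w = truncSMul n m (truncSMul n m' w) := by
  by_cases h : (equivPair i w).tail.toList.length < n
  · have h' : (equivPair i (of m' • w)).tail.toList.length < n := by
      rwa [equivPair_smul_same]
    simp only [truncSMul, if_pos h, if_pos h', map_mul, mul_smul]
  · simp only [truncSMul, if_neg h]

theorem length_truncSMul_le (m : M i) {w : Word M} (hw : w.toList.length ≤ n) :
    (truncSMul n m w).toList.length ≤ n := by
  unfold truncSMul
  split_ifs with h
  · exact (length_of_smul_le m w).trans h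
  · exact hw

end Monoid

section Group

variable {ι : Type*} {G : ι → Type*} [∀ i, Group (G i)] [DecidableEq ι]
  [∀ i, DecidableEq (G i)] (n : ℕ)

def truncPerm (i : ι) : G i →* Equiv.Perm {w : Word G // w.toList.length ≤ n} :=
  letI : MulAction (G i) {w : Word G // w.toList.length ≤ n} :=
    { smul m w := ⟨truncSMul n m w, length_truncSMul_le n m w.2⟩
      one_smul w := Subtype.ext (truncSMul_one n (i := i) w.1)
      mul_smul m m' w := Subtype.ext (truncSMul_mul n m m' w.1) }
  MulAction.toPermHom (G i) _

def truncAction : CoprodI G →* Equiv.Perm {w : Word G // w.toList.length ≤ n} :=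
  lift (truncPerm n)

theorem truncAction_of_apply {i : ι} (m : G i) (w : {w : Word G // w.toList.length ≤ n}) :
    (truncAction n (of m) w : Word G) = truncSMul n m w := by
  rw [truncAction, lift_of]
  rfl

theorem truncAction_prod_apply_empty (w : Word G) (hw : w.toList.length ≤ n) :
    truncAction n w.prod ⟨empty, Nat.zero_le n⟩ = ⟨w, hw⟩ := by
  induction w using consRecOn with
  | empty => simp
  | cons i m w hw1 hm ih =>
    have hwn : w.toList.length < n := by simpa using hw
    rw [prod_cons, map_mul, Equiv.Perm.mul_apply, ih hwn.le, Subtype.ext_iff,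
      truncAction_of_apply, truncSMul, equivPair_eq_of_fstIdx_ne hw1, if_pos hwn]
    exact (cons_eq_smul (h1 := hw1) (h2 := hm)).symm

end Group

end Monoid.CoprodI.Word

namespace Monoid.CoprodI

variable {ι : Type*} {G : ι → Type*} [∀ i, Group (G i)] [Finite ι]

theorem residuallyFinite_of_finite [∀ i, Finite (G i)] : ResiduallyFinite (CoprodI G) := by
  classical
  refine ResiduallyFinite.of_exists_finite_monoidHom fun g hg => ?_
  obtain ⟨w, rfl⟩ : ∃ w : Word G, w.prod = g := ⟨Word.equiv g, Word.equiv.symm_apply_apply g⟩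
  refine ⟨_, _, inferInstance, Word.truncAction w.toList.length, fun h => hg ?_⟩
  have hw := Word.truncAction_prod_apply_empty w.toList.length w le_rfl
  rw [h, Equiv.Perm.one_apply] at hw
  exact Word.prod_eq_one_iff.mpr (congrArg Subtype.val hw).symm

theorem residuallyFinite (hG : ∀ i, ResiduallyFinite (G i)) : ResiduallyFinite (CoprodI G) := by
  classical
  intro g hg
  obtain ⟨w, rfl⟩ : ∃ w : Word G, w.prod = g := ⟨Word.equiv g, Word.equiv.symm_apply_apply g⟩
  have hS (i : ι) : {m : G i | ⟨i, m⟩ ∈ w.toList}.Finite :=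
    w.toList.finite_toSet.preimage sigma_mk_injective.injOn
  have hS1 (i : ι) : 1 ∉ {m : G i | ⟨i, m⟩ ∈ w.toList} := fun h => w.ne_one _ h rfl
  choose F _ _ φ hφ using fun i => (hG i).exists_monoidHom_forall_ne_one (hS i) (hS1 i)
  let w' := w.map φ fun l hl => hφ l.1 l.2 hl
  have hw' : w'.prod ≠ 1 := by
    rwa [Ne, Word.prod_eq_one_iff, Word.map_eq_empty_iff, ← Word.prod_eq_one_iff]
  obtain ⟨F', _, _, ψ, hψ⟩ := residuallyFinite_of_finite w'.prod hw'
  exact ⟨F', _, ‹_›, ψ.comp (lift fun i => of.comp (φ i)),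
    by rwa [MonoidHom.comp_apply, ← Word.prod_map]⟩

end Monoid.CoprodI

namespace Monoid.Coprod

universe u v

abbrev summands (A : Type u) (B : Type v) : Bool → Type (max u v) :=
  fun b => cond b (ULift.{v} A) (ULift.{u} B)

variable {A : Type u} {B : Type v} [Group A] [Group B]

instance : ∀ b, Group (summands A B b)
  | true => inferInstanceAs (Group (ULift A))
  | false => inferInstanceAs (Group (ULift B))

def toCoprodI : A ∗ B →* CoprodI (summands A B) :=
  lift ((CoprodI.of (i := true)).comp MulEquiv.ulift.symm.toMonoidHom)
    ((CoprodI.of (i := false)).comp MulEquiv.ulift.symm.toMonoidHom)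

def ofCoprodI : CoprodI (summands A B) →* A ∗ B :=
  CoprodI.lift fun
    | true => inl.comp MulEquiv.ulift.toMonoidHom
    | false => inr.comp MulEquiv.ulift.toMonoidHom

theorem ofCoprodI_comp_toCoprodI : (ofCoprodI (A := A) (B := B)).comp toCoprodI = .id _ :=
  hom_ext (MonoidHom.ext fun _ => CoprodI.lift_of _ _) (MonoidHom.ext fun _ => CoprodI.lift_of _ _)

theorem toCoprodI_injective : Function.Injective (toCoprodI (A := A) (B := B)) :=
  Function.LeftInverse.injective (g := ofCoprodI) (DFunLike.congr_fun ofCoprodI_comp_toCoprodI)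

end Monoid.Coprod

/-- The free product of two residually finite groups is residually finite. -/
theorem residuallyFinite_free_product {A B : Type*} [Group A] [Group B]
    (hA : ResiduallyFinite A) (hB : ResiduallyFinite B) :
    ResiduallyFinite (Monoid.Coprod A B) := by
  have hAB : ∀ b, ResiduallyFinite (Monoid.Coprod.summands A B b)
    | true => hA.of_injective (MulEquiv.ulift : ULift A ≃* A).toMonoidHom MulEquiv.ulift.injective
    | false => hB.of_injective (MulEquiv.ulift : ULift B ≃* B).toMonoidHom MulEquiv.ulift.injective
  exact (Monoid.CoprodI.residuallyFinite hAB).of_injective _ Monoid.Coprod.toCoprodI_injective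
end

section
/- Let G be a residually finite group and let A be a maximal abelian subgroup of G, i.e., A is commutative and A is not properly contained in any commutative subgroup of G. Then A is separable in G. -/
/-!
A maximal abelian subgroup is its own centralizer, hence an intersection of centralizers of
single elements. In a residually finite group each such centralizer is separable: if `g` does not
commute with `a`, a finite quotient in which the commutator `⁅g, a⁆` survives separates `g` from
the preimage of the centralizer of the image of `a`. Intersections of separable subgroups are
separable.
-/

open Subgroup
open scoped commutatorElement

theorem SubgroupSeparable.iInf {G : Type*} [Group G] {ι : Sort*} {H : ι → Subgroup G}
    (hH : ∀ i, SubgroupSeparable (H i)) : SubgroupSeparable (⨅ i, H i) := by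
  intro g hg
  obtain ⟨i, hgi⟩ : ∃ i, g ∉ H i := by simpa [mem_iInf] using hg
  obtain ⟨K, hK, hHK, hgK⟩ := hH i g hgi
  exact ⟨K, hK, (iInf_le H i).trans hHK, hgK⟩

theorem ResiduallyFinite.subgroupSeparable_centralizer_singleton {G : Type*} [Group G]
    (hG : ResiduallyFinite G) (a : G) : SubgroupSeparable (centralizer {a}) := by
  intro g hg
  have hga : ⁅g, a⁆ ≠ 1 := by
    rwa [Ne, commutatorElement_eq_one_iff_mul_comm, ← mem_centralizer_singleton_iff]
  obtain ⟨F, _, _, φ, hφ⟩ := hG _ hga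
  refine ⟨(centralizer {φ a}).comap φ, ⟨by rw [index_comap]; exact index_ne_zero_of_finite⟩,
    fun x hx => ?_, fun hgK => hφ ?_⟩
  · rw [mem_comap, mem_centralizer_singleton_iff, ← map_mul, ← map_mul,
      mem_centralizer_singleton_iff.mp hx]
  · rw [map_commutatorElement, commutatorElement_eq_one_iff_mul_comm]
    exact mem_centralizer_singleton_iff.mp hgK

theorem ResiduallyFinite.subgroupSeparable_centralizer {G : Type*} [Group G]
    (hG : ResiduallyFinite G) (s : Set G) : SubgroupSeparable (centralizer s) := by
  rw [centralizer_eq_iInf]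
  exact SubgroupSeparable.iInf fun a =>
    SubgroupSeparable.iInf fun _ => hG.subgroupSeparable_centralizer_singleton a

theorem Subgroup.centralizer_eq_self_of_maximal_isMulCommutative {G : Type*} [Group G]
    {A : Subgroup G} (hcomm : IsMulCommutative A)
    (hmax : ∀ B : Subgroup G, IsMulCommutative B → A ≤ B → B = A) :
    centralizer (A : Set G) = A := by
  refine le_antisymm (fun g hg => ?_) (le_centralizer A)
  have hinsert : ∀ x ∈ insert g (A : Set G), ∀ y ∈ insert g (A : Set G), x * y = y * x := by
    rintro x (rfl | hx) y (rfl | hy)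
    · rfl
    · exact (hg y hy).symm
    · exact hg x hx
    · exact setLike_mul_comm hx hy
  have hB := hmax _ (isMulCommutative_closure hinsert)
    ((Set.subset_insert g _).trans subset_closure)
  exact hB ▸ subset_closure (Set.mem_insert g _)

/-- In a residually finite group, every maximal abelian subgroup is separable. -/
theorem maximal_abelian_separable {G : Type*} [Group G] (hG : ResiduallyFinite G)
    (A : Subgroup G) (hcomm : IsMulCommutative A)
    (hmax : ∀ B : Subgroup G, IsMulCommutative B → A ≤ B → B = A) :
    SubgroupSeparable A := by
  rw [← centralizer_eq_self_of_maximal_isMulCommutative hcomm hmax]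
  exact hG.subgroupSeparable_centralizer A
end

section
/- Let G be a finitely generated group and let n be a positive integer. Then the intersection of all subgroups of G of index n is a subgroup of finite index in G. -/
/-- A finitely generated group has finitely many homomorphisms into a finite group. -/
lemma finite_monoidHom_of_fg {G M : Type*} [Group G] [Group M] (hfg : Group.FG G)
    [Finite M] : Finite (G →* M) := by
  obtain ⟨S, hS⟩ := hfg.1
  refine Finite.of_injective (fun f : G →* M => fun s : S => f s) fun f g h => ?_
  exact MonoidHom.eq_of_eqOn_dense hS fun x hx => congrFun h ⟨x, hx⟩

/-- Every subgroup of index `n > 0` is the preimage of a point stabilizer under a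
homomorphism to `Perm (Fin n)`. -/
lemma exists_comap_stabilizer {G : Type*} [Group G] {n : ℕ} (hn : 0 < n)
    (H : Subgroup G) (hH : H.index = n) :
    ∃ p : (G →* Equiv.Perm (Fin n)) × Fin n,
      H = (MulAction.stabilizer (Equiv.Perm (Fin n)) p.2).comap p.1 := by
  have hfin : Finite (G ⧸ H) := Nat.finite_of_card_ne_zero (by rw [show Nat.card (G ⧸ H) = H.index from rfl]; omega)
  have hcard : Nat.card (G ⧸ H) = Nat.card (Fin n) := by
    rw [show Nat.card (G ⧸ H) = H.index from rfl, hH, Nat.card_eq_fintype_card, Fintype.card_fin]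
  obtain ⟨e⟩ := Finite.card_eq.mp hcard
  let ψ : Equiv.Perm (G ⧸ H) →* Equiv.Perm (Fin n) :=
    MonoidHom.mk' (fun p => e.permCongr p) (by
      intro a b
      ext x
      simp [Equiv.permCongr_def])
  refine ⟨⟨ψ.comp (MulAction.toPermHom G (G ⧸ H)), e ((1 : G) : G ⧸ H)⟩, ?_⟩
  ext g
  simp only [Subgroup.mem_comap, MulAction.mem_stabilizer_iff, Equiv.Perm.smul_def,
    MonoidHom.comp_apply, MulAction.toPermHom_apply, MonoidHom.mk'_apply,
    Equiv.permCongr_apply, Equiv.symm_apply_apply, EmbeddingLike.apply_eq_iff_eq, ψ]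
  rw [MulAction.toPerm_apply, ← MulAction.mem_stabilizer_iff, MulAction.stabilizer_quotient]

/-- In a finitely generated group, the intersection of all subgroups of index `n`
has finite index. -/
theorem iInf_index_finiteIndex {G : Type*} [Group G] (hfg : Group.FG G)
    (n : ℕ) (hn : 0 < n) :
    (⨅ H ∈ {H : Subgroup G | H.index = n}, H).FiniteIndex := by
  have hperm : Finite (G →* Equiv.Perm (Fin n)) := finite_monoidHom_of_fg hfg
  have hfinS : Finite {H : Subgroup G | H.index = n} := by
    have hex : ∀ H : {H : Subgroup G | H.index = n},
        ∃ p : (G →* Equiv.Perm (Fin n)) × Fin n,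
          (H : Subgroup G) = (MulAction.stabilizer (Equiv.Perm (Fin n)) p.2).comap p.1 :=
      fun H => exists_comap_stabilizer hn H.1 H.2
    choose p hp using hex
    exact Finite.of_injective p fun H₁ H₂ h => Subtype.ext (by rw [hp H₁, hp H₂, h])
  rw [iInf_subtype']
  exact Subgroup.finiteIndex_iInf fun H => ⟨by have := H.2; simp only [Set.mem_setOf_eq] at this; omega⟩
end

section
/- For every type α, the free group on α is residually finite. -/
theorem List.prod_map_perm_apply_last {α β : Type*} (τ : α → Equiv.Perm β) (w : List α)
    (p : Fin (w.length + 1) → β) (h : ∀ k : Fin w.length, τ w[k] (p k.succ) = p k.castSucc) :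
    (w.map τ).prod (p (Fin.last _)) = p 0 := by
  induction w with
  | nil => rfl
  | cons x w ih =>
    have hw := ih (p ∘ Fin.succ) fun k => (h k.succ).trans (congrArg p (Fin.succ_castSucc k).symm)
    exact (congrArg (τ x) hw).trans (h 0)

namespace FreeGroup

variable {α : Type*} {w : List (α × Bool)}

theorem IsReduced.snd_eq_of_fst_eq (hw : IsReduced w) {k l : Fin w.length}
    (hkl : (l : ℕ) = k + 1) (h : w[k].1 = w[l].1) : w[k].2 = w[l].2 := by
  obtain ⟨l, hl⟩ := l
  simp only at hkl h ⊢
  subst hkl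
  exact List.IsChain.getElem hw k hl h

theorem IsReduced.injective_ite_succ_castSucc (hw : IsReduced w) (a : α) (c : Bool) :
    Function.Injective fun k : {k : Fin w.length // w[k].1 = a} =>
      if w[k.1].2 = c then k.1.succ else k.1.castSucc := by
  rintro ⟨k, hk⟩ ⟨l, hl⟩ h
  simp only [Subtype.mk.injEq, Fin.ext_iff] at h ⊢
  split_ifs at h with hkc hlc hlc <;> simp only [Fin.val_succ, Fin.val_castSucc] at h
  · omega
  · exact absurd (hw.snd_eq_of_fst_eq h.symm (hk.trans hl.symm) ▸ hkc) hlc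
  · exact absurd (hw.snd_eq_of_fst_eq h (hl.trans hk.symm) ▸ hlc) hkc
  · omega

theorem IsReduced.exists_perm_cond_apply_succ (hw : IsReduced w) :
    ∃ σ : α → Equiv.Perm (Fin (w.length + 1)), ∀ k : Fin w.length,
      cond w[k].2 (σ w[k].1) (σ w[k].1)⁻¹ k.succ = k.castSucc := by
  choose σ hσ using fun a => Equiv.Perm.exists_extending_pair _ _
    (hw.injective_ite_succ_castSucc a true) (hw.injective_ite_succ_castSucc a false)
  refine ⟨σ, fun k => ?_⟩
  have h := hσ _ ⟨k, rfl⟩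
  cases hb : w[k].2 <;> simp only [hb, Bool.false_eq_true, Bool.true_eq_false, if_true,
    if_false] at h
  · rw [cond_false, Equiv.Perm.inv_eq_iff_eq, h]
  · exact h

theorem exists_lift_perm_apply_last [DecidableEq α] (x : FreeGroup α) :
    ∃ σ : α → Equiv.Perm (Fin (x.toWord.length + 1)), lift σ x (Fin.last _) = 0 := by
  obtain ⟨σ, hσ⟩ := (isReduced_toWord (x := x)).exists_perm_cond_apply_succ
  refine ⟨σ, ?_⟩
  have hx : lift σ x = lift σ (mk x.toWord) := by rw [mk_toWord]
  rw [hx, lift_mk]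
  exact List.prod_map_perm_apply_last _ _ id hσ

end FreeGroup

/-- Free groups are residually finite. -/
theorem freeGroup_residuallyFinite (α : Type*) : ResiduallyFinite (FreeGroup α) := by
  classical
  intro g hg
  obtain ⟨σ, hσ⟩ := FreeGroup.exists_lift_perm_apply_last g
  refine ⟨_, inferInstance, inferInstance, FreeGroup.lift σ, fun h => hg ?_⟩
  rw [h, Equiv.Perm.one_apply, Fin.last_eq_zero_iff, List.length_eq_zero_iff] at hσ
  exact FreeGroup.toWord_eq_nil_iff.mp hσ
end
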